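/- Evolutionary vector fields are characterized by commutation with total derivatives: if a vector field v = Σ_{α,K} c^α_K ∂/∂u^α_K + Σ_i a_i ∂/∂x_i (with constant coefficients a_i) satisfies [D_i, v] = 0 for all i = 1,...,p, then v equals pr_Q + Σ_i a_i D_i for Q^α = c^α_0 − Σ_i a_i u^α_i (i.e., up to total derivative fields, v is the prolongation of an evolutionary vector field). -/

import Mathlib

/-
Evaluating `[D_i, v] = 0` on `u^α_K` gives `c^α_{K+e_i} = D_i c^α_K`, hence `c^α_K = D_K c^α_0`.
Since also `D_K u^α_{e_i} = u^α_{K+e_i}`, the field `pr_Q + Σ_i a_i D_i` sends `u^α_K` to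
`D_K c^α_0 - Σ_i a_i u^α_{K+e_i} + Σ_i a_i u^α_{K+e_i} = c^α_K`, and it sends `x_j` to `a_j`,
as `v` does; a derivation of a polynomial ring is determined by its values on the variables.
-/

open MvPolynomial

/-- Jet variables: the independent variables `x i` and the derivatives `u^α_K`. -/
abbrev JetVar (p q : ℕ) := Sum (Fin p) (Fin q × (Fin p →₀ ℕ))

/-- The ring of differential (polynomial) functions on the jet manifold. -/
abbrev JetRing (p q : ℕ) := MvPolynomial (JetVar p q) ℚ

/-- The total differential operator `D_i = ∂/∂x_i + Σ_{α,K} u^α_{Ki} ∂/∂u^α_K`. -/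
noncomputable def totalD (p q : ℕ) (i : Fin p) :
    Derivation ℚ (JetRing p q) (JetRing p q) :=
  MvPolynomial.mkDerivation ℚ (fun v => match v with
    | Sum.inl j => if i = j then 1 else 0
    | Sum.inr (α, K) => X (Sum.inr (α, K + Finsupp.single i 1)))

/-- The multi total differential operator `D_K = D_1^{K_1} ∘ ⋯ ∘ D_p^{K_p}`. -/
noncomputable def DmultiK (p q : ℕ) (K : Fin p →₀ ℕ) :
    Module.End ℚ (JetRing p q) :=
  (List.finRange p).foldr (fun i f => ((totalD p q i).toLinearMap ^ (K i)) * f) 1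

/-- The prolongation `pr_Q = Σ_{α,K} (D_K Q^α) ∂/∂u^α_K`. -/
noncomputable def prolong (p q : ℕ) (Q : Fin q → JetRing p q) :
    Derivation ℚ (JetRing p q) (JetRing p q) :=
  MvPolynomial.mkDerivation ℚ (fun v => match v with
    | Sum.inl _ => 0
    | Sum.inr (α, K) => DmultiK p q K (Q α))

/-- A general vector field `v = Σ_{α,K} c^α_K ∂/∂u^α_K + Σ_i a_i ∂/∂x_i` with
constant coefficients `a_i`. -/
noncomputable def genField (p q : ℕ) (c : Fin q → (Fin p →₀ ℕ) → JetRing p q)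
    (a : Fin p → ℚ) : Derivation ℚ (JetRing p q) (JetRing p q) :=
  MvPolynomial.mkDerivation ℚ (fun v => match v with
    | Sum.inl i => C (a i)
    | Sum.inr (α, K) => c α K)

theorem Derivation.finset_sum_apply {R A M ι : Type*} [CommSemiring R] [CommSemiring A]
    [AddCommMonoid M] [Algebra R A] [Module A M] [Module R M]
    (s : Finset ι) (D : ι → Derivation R A M) (f : A) :
    (∑ i ∈ s, D i) f = ∑ i ∈ s, D i f := by
  rw [← Derivation.coeFnAddMonoidHom_apply, map_sum, Finset.sum_apply]
  rfl

namespace JetRing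

variable {p q : ℕ}

@[simp]
theorem totalD_X_inl (i j : Fin p) :
    totalD p q i (X (Sum.inl j)) = if i = j then 1 else 0 :=
  mkDerivation_X _ _ _

@[simp]
theorem totalD_X_inr (i : Fin p) (α : Fin q) (K : Fin p →₀ ℕ) :
    totalD p q i (X (Sum.inr (α, K))) = X (Sum.inr (α, K + Finsupp.single i 1)) :=
  mkDerivation_X _ _ _

@[simp]
theorem genField_X_inl (c : Fin q → (Fin p →₀ ℕ) → JetRing p q) (a : Fin p → ℚ) (i : Fin p) :
    genField p q c a (X (Sum.inl i)) = C (a i) :=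
  mkDerivation_X _ _ _

@[simp]
theorem genField_X_inr (c : Fin q → (Fin p →₀ ℕ) → JetRing p q) (a : Fin p → ℚ) (α : Fin q)
    (K : Fin p →₀ ℕ) : genField p q c a (X (Sum.inr (α, K))) = c α K :=
  mkDerivation_X _ _ _

@[simp]
theorem prolong_X_inl (Q : Fin q → JetRing p q) (i : Fin p) :
    prolong p q Q (X (Sum.inl i)) = 0 :=
  mkDerivation_X _ _ _

@[simp]
theorem prolong_X_inr (Q : Fin q → JetRing p q) (α : Fin q) (K : Fin p →₀ ℕ) :
    prolong p q Q (X (Sum.inr (α, K))) = DmultiK p q K (Q α) :=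
  mkDerivation_X _ _ _

/- Both `K ↦ u^α_{L+K}` and the coefficients `K ↦ c^α_K` of a field commuting with every `D_i`
are such families. -/
def ShiftsUnderTotalD (g : (Fin p →₀ ℕ) → JetRing p q) : Prop :=
  ∀ K i, g (K + Finsupp.single i 1) = totalD p q i (g K)

section Shift

variable {g : (Fin p →₀ ℕ) → JetRing p q} (hg : ShiftsUnderTotalD g)
include hg

theorem pow_totalD_apply_of_shift (i : Fin p) (n : ℕ) (L : Fin p →₀ ℕ) :
    ((totalD p q i).toLinearMap ^ n) (g L) = g (L + n • Finsupp.single i 1) := by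
  induction n with
  | zero => simp
  | succ n ih =>
    rw [pow_succ', Module.End.mul_apply, ih, succ_nsmul, ← add_assoc, hg]
    rfl

theorem foldr_pow_totalD_apply_of_shift
    (m : Fin p → ℕ) (l : List (Fin p)) (L : Fin p →₀ ℕ) :
    (l.foldr (fun i f => ((totalD p q i).toLinearMap ^ m i) * f) 1) (g L) =
      g (L + (l.map fun i => m i • Finsupp.single i 1).sum) := by
  induction l with
  | nil => simp
  | cons j l ih =>
    rw [List.foldr_cons, Module.End.mul_apply, ih, pow_totalD_apply_of_shift hg,
      List.map_cons, List.sum_cons, add_assoc, add_comm (m j • _)]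

theorem DmultiK_apply_of_shift (K : Fin p →₀ ℕ) : DmultiK p q K (g 0) = g K := by
  have hK : ((List.finRange p).map fun i => K i • Finsupp.single i 1).sum = K := by
    simp only [← Fin.sum_univ_def, Finsupp.smul_single_one, Finsupp.univ_sum_single]
  rw [DmultiK, foldr_pow_totalD_apply_of_shift hg, hK, zero_add]

end Shift

theorem DmultiK_X_inr (α : Fin q) (L K : Fin p →₀ ℕ) :
    DmultiK p q K (X (Sum.inr (α, L))) = X (Sum.inr (α, L + K)) := by
  have hX : ShiftsUnderTotalD fun K => (X (Sum.inr (α, L + K)) : JetRing p q) := fun K i => by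
    rw [totalD_X_inr, add_assoc]
  simpa using DmultiK_apply_of_shift hX K

theorem shiftsUnderTotalD_coeff_of_commute (c : Fin q → (Fin p →₀ ℕ) → JetRing p q)
    (a : Fin p → ℚ) (hcomm : ∀ i, ⁅totalD p q i, genField p q c a⁆ = 0) (α : Fin q) :
    ShiftsUnderTotalD (c α) := by
  intro K i
  have h := congrArg (· (X (Sum.inr (α, K)))) (hcomm i)
  simp only [Derivation.commutator_apply, totalD_X_inr, genField_X_inr,
    Derivation.zero_apply, sub_eq_zero] at h
  exact h.symm

end JetRing

open JetRing

/-- Evolutionary vector fields are characterized by commutation with total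
derivatives: if `v = Σ_{α,K} c^α_K ∂/∂u^α_K + Σ_i a_i ∂/∂x_i` satisfies
`[D_i, v] = 0` for all `i`, then `v = pr_Q + Σ_i a_i D_i` with
`Q^α = c^α_0 − Σ_i a_i u^α_i`. -/
theorem evolutionary_characterization (p q : ℕ)
    (c : Fin q → (Fin p →₀ ℕ) → JetRing p q) (a : Fin p → ℚ)
    (hcomm : ∀ i : Fin p, ⁅totalD p q i, genField p q c a⁆ = 0) :
    genField p q c a =
      prolong p q (fun α => c α 0 -
        ∑ i : Fin p, a i • X (Sum.inr (α, Finsupp.single i 1))) +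
      ∑ i : Fin p, a i • totalD p q i := by
  have hc : ∀ α K, DmultiK p q K (c α 0) = c α K := fun α =>
    DmultiK_apply_of_shift (shiftsUnderTotalD_coeff_of_commute c a hcomm α)
  refine derivation_ext fun v => ?_
  rcases v with j | ⟨α, K⟩
  · simp [Derivation.finset_sum_apply, smul_eq_C_mul]
  · simp [Derivation.finset_sum_apply, DmultiK_X_inr, hc, add_comm K]
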